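/- arXiv:2504.00940 — 4 statements merged into one kernel-verified Lean document; each statement's English description precedes it below -/
import Mathlib

section
/- Let k be a positive even integer and let s be a vertex of degree at least 2 in an (s,k)-edge-connected finite graph G in which every vertex has even degree. Then the complement of the k-lifting graph L(G,s,k) is disconnected. -/
/-- A multigraph: parallel edges allowed, no loops. Each edge `e` has a pair of
distinct end-vertices `ends e`. -/
structure Multigraph (V : Type u) (E : Type v) where
  ends : E → Sym2 V
  no_loops : ∀ e : E, ¬ (ends e).IsDiag

namespace Multigraph

variable {V : Type u} {E : Type v}

/-- A walk in a multigraph, recorded as the sequence of traversed edges. -/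
inductive Walk (G : Multigraph V E) : V → V → Type (max u v)
  | nil (v : V) : Walk G v v
  | cons {u v w : V} (e : E) (h : G.ends e = s(u, v)) (p : Walk G v w) : Walk G u w

namespace Walk

variable {G : Multigraph V E}

/-- The list of edges traversed by a walk. -/
def edges : ∀ {a b : V}, G.Walk a b → List E
  | _, _, .nil _ => []
  | _, _, .cons e _ p => e :: p.edges

/-- The list of vertices visited by a walk. -/
def support : ∀ {a b : V}, G.Walk a b → List V
  | a, _, .nil _ => [a]
  | a, _, .cons _ _ p => a :: p.support

/-- A walk is a path if it has no repeated vertices. -/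
def IsPath {a b : V} (p : G.Walk a b) : Prop := p.support.Nodup

end Walk

/-- `G` is `k`-edge-connected: between any two distinct vertices there are `k`
pairwise edge-disjoint paths. -/
def EdgeConnected (G : Multigraph V E) (k : ℕ) : Prop :=
  ∀ u v : V, u ≠ v → ∃ P : Fin k → G.Walk u v,
    (∀ i, (P i).IsPath) ∧ ∀ i j, i ≠ j → ∀ e, e ∈ (P i).edges → e ∉ (P j).edges

/-- `G` is weakly `k`-linked: for every `k` pairs of vertices `(s i, t i)` with
`s i ≠ t i` there are pairwise edge-disjoint paths `P i` joining `s i` and `t i`. -/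
def WeaklyLinked (G : Multigraph V E) (k : ℕ) : Prop :=
  ∀ s t : Fin k → V, (∀ i, s i ≠ t i) →
    ∃ P : (i : Fin k) → G.Walk (s i) (t i),
      (∀ i, (P i).IsPath) ∧ ∀ i j, i ≠ j → ∀ e, e ∈ (P i).edges → e ∉ (P j).edges

end Multigraph

namespace Multigraph

variable {V : Type u} {E : Type v}

/-- `G` is `(s,k)`-edge-connected: between any two distinct vertices different
from `s` there are `k` pairwise edge-disjoint paths (possibly through `s`). -/
def SEdgeConnected (G : Multigraph V E) (s : V) (k : ℕ) : Prop :=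
  ∀ u v : V, u ≠ s → v ≠ s → u ≠ v → ∃ P : Fin k → G.Walk u v,
    (∀ i, (P i).IsPath) ∧ ∀ i j, i ≠ j → ∀ e, e ∈ (P i).edges → e ∉ (P j).edges

/-- The lift `G_{sx,sy}`: delete the edges `e₁ = sx` and `e₂ = sy` and add a new
edge joining `x` and `y`; if `x = y` no new edge is added (the loop is deleted). -/
def lift (G : Multigraph V E) (e₁ e₂ : E) (x y : V) :
    Multigraph V ({e : E // e ≠ e₁ ∧ e ≠ e₂} ⊕ PLift (x ≠ y)) where
  ends := Sum.elim (fun e => G.ends e.1) (fun _ => s(x, y))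
  no_loops := by
    rintro (e | h)
    · exact G.no_loops e.1
    · intro hd
      exact h.down (Sym2.mk_isDiag_iff.mp hd)

/-- The pair of edges `e₁, e₂` incident with `s` is `k`-liftable: the lift
`G_{e₁,e₂}` is `(s,k)`-edge-connected. -/
def Liftable (G : Multigraph V E) (s : V) (k : ℕ) (e₁ e₂ : E) : Prop :=
  e₁ ≠ e₂ ∧ ∃ x y : V, G.ends e₁ = s(s, x) ∧ G.ends e₂ = s(s, y) ∧
    (G.lift e₁ e₂ x y).SEdgeConnected s k

/-- The `k`-lifting graph `L(G,s,k)`: its vertices are the edges of `G` incident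
with `s`, two of them being adjacent iff they form a `k`-liftable pair. -/
def liftingGraph (G : Multigraph V E) (s : V) (k : ℕ) :
    SimpleGraph {e : E // s ∈ G.ends e} where
  Adj f₁ f₂ := G.Liftable s k f₁.1 f₂.1 ∨ G.Liftable s k f₂.1 f₁.1
  symm := ⟨fun _ _ h => h.symm⟩
  loopless := ⟨fun f h => by rcases h with h | h <;> exact h.1 rfl⟩

/-- The degree of a vertex: the number of edges incident with it. -/
noncomputable def degree (G : Multigraph V E) (v : V) : ℕ :=
  {e : E | v ∈ G.ends e}.ncard

end Multigraph

/-!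
Call a set `X` of vertices avoiding `s` *tight* if it separates two vertices other than `s` and
exactly `k` edges leave it. By Menger's theorem, `(s,k)`-edge-connectivity means that every such
separating set has at least `k` leaving edges. Since all degrees are even, all cuts are even, so a
separating set that contains `x` and `y` but is not tight has at least `k + 2` leaving edges, and
lifting `sx, sy` removes only two of them: the pair is liftable unless a tight set contains both
`x` and `y`.

If no tight set contains a neighbour of `s`, the lifting graph is complete. Otherwise take a
maximal tight set `X` containing a neighbour of `s`; it misses some neighbour, as otherwise the
set of vertices outside `X ∪ {s}` would have fewer than `k` leaving edges. Every `sx` with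
`x ∈ X` is liftable with every `sy` with `y ∉ X`: a tight set `Y` containing `x` and `y` would
either make `X ∪ Y` tight (submodularity), contradicting maximality, or cover all vertices but `s`
together with `X`, which posimodularity forbids because the edge `sx` ends in `X ∩ Y`. Hence the
complement of the lifting graph has no edge between the two classes.
-/

lemma Set.ncard_setOf_eq_sum {α : Type*} [Fintype α] (p : α → Prop) [DecidablePred p] :
    {x | p x}.ncard = ∑ x, if p x then 1 else 0 := by
  rw [Set.ncard_eq_toFinset_card', Set.toFinset_ofPred, Finset.card_filter]

theorem Relation.ReflTransGen.exists_nodup_isChain {α : Type*} {r : α → α → Prop} {a b : α}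
    (h : Relation.ReflTransGen r a b) : ∃ l : List α,
      (a :: l).Nodup ∧ (a :: l).IsChain r ∧ (a :: l).getLast (List.cons_ne_nil a l) = b := by
  induction h using Relation.ReflTransGen.head_induction_on with
  | refl => exact ⟨[], List.nodup_singleton _, List.isChain_singleton _, rfl⟩
  | @head a c hac _ ih =>
    obtain ⟨l, hnd, hchain, hlast⟩ := ih
    by_cases ha : a ∈ c :: l
    · obtain ⟨l₁, l₂, hsplit⟩ := List.append_of_mem ha
      refine ⟨l₂, (hsplit ▸ hnd).sublist (List.sublist_append_right _ _),
        (hsplit ▸ hchain).right_of_append, ?_⟩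
      rw [← hlast]
      simp [hsplit]
    · exact ⟨c :: l, List.nodup_cons.mpr ⟨ha, hnd⟩, hchain.cons_cons hac, hlast⟩

lemma SimpleGraph.not_connected_compl_of_forall_adj {α : Type*} {H : SimpleGraph α} {S : Set α}
    {a b : α} (ha : a ∈ S) (hb : b ∉ S) (hS : ∀ x ∈ S, ∀ y ∉ S, H.Adj x y) : ¬ Hᶜ.Connected := by
  intro hconn
  obtain ⟨p⟩ := hconn.preconnected a b
  obtain ⟨d, -, hd₁, hd₂⟩ := p.exists_boundary_dart S ha hb
  exact ((SimpleGraph.compl_adj _ _ _).mp d.adj).2 (hS _ hd₁ _ hd₂)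

namespace Multigraph

variable {V : Type u} {E : Type v} {G : Multigraph V E}

lemma exists_ends_eq (G : Multigraph V E) (e : E) : ∃ a b, G.ends e = s(a, b) ∧ a ≠ b := by
  obtain ⟨⟨a, b⟩, h⟩ := Quot.exists_rep (G.ends e)
  exact ⟨a, b, h.symm, fun hab => G.no_loops e (by rw [← h, hab]; exact Sym2.mk_isDiag_iff.mpr rfl)⟩

def Crosses (G : Multigraph V E) (e : E) (A : Set V) : Prop :=
  ∃ a b, G.ends e = s(a, b) ∧ a ∈ A ∧ b ∉ A

noncomputable def cut (G : Multigraph V E) (A : Set V) : ℕ :=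
  {e | G.Crosses e A}.ncard

lemma crosses_iff {e : E} {A : Set V} {a b : V} (h : G.ends e = s(a, b)) :
    G.Crosses e A ↔ a ∈ A ∧ b ∉ A ∨ b ∈ A ∧ a ∉ A := by
  constructor
  · rintro ⟨c, d, hcd, hc, hd⟩
    rw [h, Sym2.eq_iff] at hcd
    rcases hcd with ⟨rfl, rfl⟩ | ⟨rfl, rfl⟩ <;> tauto
  · rintro (⟨ha, hb⟩ | ⟨hb, ha⟩)
    exacts [⟨a, b, h, ha, hb⟩, ⟨b, a, h.trans Sym2.eq_swap, hb, ha⟩]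

lemma crosses_compl {e : E} {A : Set V} : G.Crosses e Aᶜ ↔ G.Crosses e A := by
  obtain ⟨a, b, h, -⟩ := G.exists_ends_eq e
  simp only [crosses_iff h, Set.mem_compl_iff, not_not]
  tauto

lemma cut_compl (G : Multigraph V E) (A : Set V) : G.cut Aᶜ = G.cut A := by
  simp only [cut, crosses_compl]

section Counting

open scoped Classical

variable [Fintype E]

lemma cut_eq_sum (A : Set V) : G.cut A = ∑ e, if G.Crosses e A then 1 else 0 :=
  Set.ncard_setOf_eq_sum _

lemma degree_eq_sum (v : V) : G.degree v = ∑ e, if v ∈ G.ends e then 1 else 0 :=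
  Set.ncard_setOf_eq_sum _

lemma cut_union_add_cut_inter_le (X Y : Set V) :
    G.cut (X ∪ Y) + G.cut (X ∩ Y) ≤ G.cut X + G.cut Y := by
  simp only [cut_eq_sum, ← Finset.sum_add_distrib]
  refine Finset.sum_le_sum fun e _ => ?_
  obtain ⟨a, b, h, -⟩ := G.exists_ends_eq e
  simp only [crosses_iff h, Set.mem_union, Set.mem_inter_iff]
  by_cases a ∈ X <;> by_cases a ∈ Y <;> by_cases b ∈ X <;> by_cases b ∈ Y <;> simp [*]

/-- The extra term counts the edges from `X ∩ Y` to the complement of `X ∪ Y`. -/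
lemma cut_diff_add_cut_diff_add_le (X Y : Set V) :
    G.cut (X \ Y) + G.cut (Y \ X) +
        2 * {e | G.Crosses e (X ∩ Y) ∧ G.Crosses e (X ∪ Y)}.ncard ≤ G.cut X + G.cut Y := by
  simp only [cut_eq_sum, Set.ncard_setOf_eq_sum, Finset.mul_sum, ← Finset.sum_add_distrib]
  refine Finset.sum_le_sum fun e _ => ?_
  obtain ⟨a, b, h, -⟩ := G.exists_ends_eq e
  simp only [crosses_iff h, Set.mem_union, Set.mem_inter_iff, Set.mem_sdiff]
  by_cases a ∈ X <;> by_cases a ∈ Y <;> by_cases b ∈ X <;> by_cases b ∈ Y <;> simp [*]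

lemma sum_degree_eq_cut_add (A : Finset V) :
    ∑ v ∈ A, G.degree v = G.cut ↑A + 2 * {e | ∀ v ∈ G.ends e, v ∈ A}.ncard := by
  simp only [degree_eq_sum, cut_eq_sum, Set.ncard_setOf_eq_sum, Finset.mul_sum]
  rw [Finset.sum_comm, ← Finset.sum_add_distrib]
  refine Finset.sum_congr rfl fun e _ => ?_
  obtain ⟨a, b, h, hab⟩ := G.exists_ends_eq e
  have hsplit : ∀ v, (if v ∈ s(a, b) then 1 else 0) =
      (if a = v then 1 else 0) + if b = v then 1 else 0 := by
    intro v
    simp only [Sym2.mem_iff]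
    split_ifs <;> subst_vars <;> grind
  simp only [h, hsplit, Finset.sum_add_distrib, Finset.sum_ite_eq, crosses_iff h,
    Sym2.forall_mem_pair]
  by_cases a ∈ A <;> by_cases b ∈ A <;> simp [*]

lemma cut_insert_add_degree {s : V} {X : Set V} (hs : s ∉ X)
    (hX : ∀ e p, G.ends e = s(s, p) → p ∈ X) : G.cut (insert s X) + G.degree s = G.cut X := by
  simp only [cut_eq_sum, degree_eq_sum, ← Finset.sum_add_distrib]
  refine Finset.sum_congr rfl fun e _ => ?_
  obtain ⟨a, b, h, hab⟩ := G.exists_ends_eq e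
  have ha : a = s → b ∈ X := fun ha => hX e b (ha ▸ h)
  have hb : b = s → a ∈ X := fun hb => hX e a (by rw [h, hb, Sym2.eq_swap])
  simp only [crosses_iff h, h, Sym2.mem_iff, Set.mem_insert_iff]
  by_cases a = s <;> by_cases b = s <;> by_cases a ∈ X <;> by_cases b ∈ X <;> grind

end Counting

lemma even_cut [Finite V] [Finite E] (heven : ∀ v, Even (G.degree v)) (A : Set V) :
    Even (G.cut A) := by
  cases nonempty_fintype E
  lift A to Finset V using A.toFinite
  have hsum := G.sum_degree_eq_cut_add A
  have hsum_even : Even (∑ v ∈ A, G.degree v) := Finset.even_sum _ fun v _ => heven v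
  rw [hsum, Nat.even_add] at hsum_even
  exact hsum_even.mpr (even_two_mul _)

namespace Walk

def copy {a b a' b' : V} (p : G.Walk a b) (ha : a = a') (hb : b = b') : G.Walk a' b' :=
  ha ▸ hb ▸ p

@[simp] lemma support_copy {a b a' b' : V} (p : G.Walk a b) (ha : a = a') (hb : b = b') :
    (p.copy ha hb).support = p.support := by
  subst ha hb; rfl

@[simp] lemma edges_copy {a b a' b' : V} (p : G.Walk a b) (ha : a = a') (hb : b = b') :
    (p.copy ha hb).edges = p.edges := by
  subst ha hb; rfl

lemma exists_mem_edges_crosses {A : Set V} :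
    ∀ {a b : V} (p : G.Walk a b), a ∈ A → b ∉ A → ∃ e ∈ p.edges, G.Crosses e A
  | _, _, .nil _, ha, hb => absurd ha hb
  | a, _, .cons (v := c) e he p, ha, hb => by
    by_cases hc : c ∈ A
    · obtain ⟨e', he', hcross⟩ := p.exists_mem_edges_crosses hc hb
      exact ⟨e', List.mem_cons_of_mem _ he', hcross⟩
    · exact ⟨e, List.mem_cons_self, a, c, he, ha, hc⟩

variable [DecidableEq V]

def dropUntil {w : V} : ∀ {a b : V} (p : G.Walk a b), w ∈ p.support → G.Walk w b
  | a, _, .nil _, h => (Walk.nil a).copy (List.mem_singleton.mp h).symm rfl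
  | a, _, .cons e he p, h =>
    if hw : w = a then (Walk.cons e he p).copy hw.symm rfl
    else p.dropUntil ((List.mem_cons.mp h).resolve_left hw)

lemma edges_dropUntil_subset {w : V} :
    ∀ {a b : V} (p : G.Walk a b) (h : w ∈ p.support), (p.dropUntil h).edges ⊆ p.edges
  | _, _, .nil _, _ => by simp [dropUntil]
  | _, _, .cons e he p, h => by
    rw [dropUntil]
    split
    · simp
    · exact List.Subset.trans (edges_dropUntil_subset p _) (List.subset_cons_self _ _)

lemma support_dropUntil_sublist {w : V} :
    ∀ {a b : V} (p : G.Walk a b) (h : w ∈ p.support), (p.dropUntil h).support.Sublist p.support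
  | _, _, .nil _, _ => by simp [dropUntil]
  | _, _, .cons e he p, h => by
    rw [dropUntil]
    split
    · simp
    · exact (support_dropUntil_sublist p _).trans (List.sublist_cons_self _ _)

def bypass : ∀ {a b : V}, G.Walk a b → G.Walk a b
  | _, _, .nil a => .nil a
  | a, _, .cons e he p =>
    if hw : a ∈ p.bypass.support then p.bypass.dropUntil hw else .cons e he p.bypass

lemma edges_bypass_subset : ∀ {a b : V} (p : G.Walk a b), p.bypass.edges ⊆ p.edges
  | _, _, .nil a => by simp [bypass]
  | a, _, .cons e he p => by
    rw [bypass]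
    split
    · exact List.Subset.trans (edges_dropUntil_subset _ _)
        (List.Subset.trans (edges_bypass_subset p) (List.subset_cons_self _ _))
    · exact List.cons_subset_cons _ (edges_bypass_subset p)

lemma isPath_bypass : ∀ {a b : V} (p : G.Walk a b), p.bypass.IsPath
  | _, _, .nil a => by simp [bypass, IsPath, support]
  | a, _, .cons e he p => by
    rw [bypass]
    split
    · exact (isPath_bypass p).sublist (support_dropUntil_sublist _ _)
    · rename_i hw
      exact List.nodup_cons.mpr ⟨hw, isPath_bypass p⟩

end Walk

lemma le_cut_of_pairwise_disjoint [Finite E] {u v : V} {A : Set V} {k : ℕ}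
    {P : Fin k → G.Walk u v} (hP : ∀ i j, i ≠ j → ∀ e, e ∈ (P i).edges → e ∉ (P j).edges)
    (hu : u ∈ A) (hv : v ∉ A) : k ≤ G.cut A := by
  choose f hfP hfA using fun i => (P i).exists_mem_edges_crosses hu hv
  have hf : Function.Injective fun i => (⟨f i, hfA i⟩ : {e // G.Crosses e A}) := by
    intro i j hij
    by_contra hne
    have hfij : f i = f j := congrArg Subtype.val hij
    exact hP i j hne _ (hfP i) (hfij ▸ hfP j)
  rw [cut, ← Nat.card_coe_set_eq, Set.coe_ofPred]
  simpa using Nat.card_le_card_of_injective _ hf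

section Menger

open scoped Classical

structure Arc (G : Multigraph V E) where
  edge : E
  src : V
  dst : V
  ends_eq : G.ends edge = s(src, dst)

lemma Arc.src_ne_dst (a : Arc G) : a.src ≠ a.dst := fun h =>
  G.no_loops a.edge (by rw [a.ends_eq, h]; exact Sym2.mk_isDiag_iff.mpr rfl)

/-- The net outflow at `w` of one unit sent from `x` to `y`. -/
noncomputable def unitFlow (x y w : V) : ℤ :=
  (if x = w then 1 else 0) - if y = w then 1 else 0

lemma unitFlow_add_unitFlow (x y z w : V) : unitFlow x y w + unitFlow y z w = unitFlow x z w := by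
  simp only [unitFlow]
  ring

lemma sum_unitFlow (x y : V) (R : Finset V) :
    ∑ w ∈ R, unitFlow x y w = (if x ∈ R then 1 else 0) - if y ∈ R then 1 else 0 := by
  simp only [unitFlow, Finset.sum_sub_distrib, Finset.sum_ite_eq]

noncomputable def netOutflow (U : Finset (Arc G)) (w : V) : ℤ :=
  ∑ a ∈ U, unitFlow a.src a.dst w

lemma netOutflow_insert {U : Finset (Arc G)} {a : Arc G} (ha : a ∉ U) (w : V) :
    netOutflow (insert a U) w = netOutflow U w + unitFlow a.src a.dst w := by
  rw [netOutflow, Finset.sum_insert ha, add_comm, netOutflow]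

lemma netOutflow_erase {U : Finset (Arc G)} {a : Arc G} (ha : a ∈ U) (w : V) :
    netOutflow (U.erase a) w = netOutflow U w - unitFlow a.src a.dst w :=
  Finset.sum_erase_eq_sub ha

lemma sum_netOutflow (U : Finset (Arc G)) (R : Finset V) :
    ∑ w ∈ R, netOutflow U w =
      ∑ a ∈ U, ((if a.src ∈ R then 1 else 0) - if a.dst ∈ R then 1 else 0) := by
  simp only [netOutflow]
  rw [Finset.sum_comm]
  simp only [sum_unitFlow]

lemma exists_mem_src_eq_of_netOutflow_pos {U : Finset (Arc G)} {w : V}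
    (h : 0 < netOutflow U w) : ∃ a ∈ U, a.src = w := by
  by_contra hne
  refine h.not_ge (Finset.sum_nonpos fun a ha => ?_)
  rw [unitFlow, if_neg fun h => hne ⟨a, ha, h⟩]
  split_ifs <;> norm_num

/-- A flow of value `j` from `u` to `v` with unit edge capacities, encoded as a set of arcs using
each edge at most once. -/
def IsFlow (U : Finset (Arc G)) (u v : V) (j : ℕ) : Prop :=
  Set.InjOn Arc.edge (U : Set (Arc G)) ∧
    ∀ w, netOutflow U w = j * unitFlow u v w

def Residual (U : Finset (Arc G)) (x y : V) : Prop :=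
  (∃ e, G.ends e = s(x, y) ∧ ∀ a ∈ U, a.edge ≠ e) ∨ ∃ a ∈ U, a.src = y ∧ a.dst = x

lemma exists_residual_step {U₀ U : Finset (Arc G)} {S : Set V} {x y : V}
    (hU : Set.InjOn Arc.edge (U : Set (Arc G))) (hxy : Residual U₀ x y) (hx : x ∈ S)
    (hy : y ∈ S) (hagree : ∀ a : Arc G, a.src ∈ S → a.dst ∈ S → (a ∈ U ↔ a ∈ U₀)) :
    ∃ U' : Finset (Arc G), Set.InjOn Arc.edge (U' : Set (Arc G)) ∧
      (∀ w, netOutflow U' w = netOutflow U w + unitFlow x y w) ∧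
      ∀ a : Arc G, a.src ≠ x → a.dst ≠ x → (a ∈ U' ↔ a ∈ U) := by
  rcases hxy with ⟨e, he, hfree⟩ | ⟨b, hb, rfl, rfl⟩
  · have hfree' : ∀ a ∈ U, a.edge ≠ e := by
      intro a ha hae
      have hS : a.src ∈ S ∧ a.dst ∈ S := by
        rcases Sym2.eq_iff.mp (a.ends_eq.symm.trans (hae ▸ he)) with ⟨h₁, h₂⟩ | ⟨h₁, h₂⟩
        exacts [⟨h₁ ▸ hx, h₂ ▸ hy⟩, ⟨h₁ ▸ hy, h₂ ▸ hx⟩]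
      exact hfree a ((hagree a hS.1 hS.2).mp ha) hae
    let a₀ : Arc G := ⟨e, x, y, he⟩
    have ha₀ : a₀ ∉ U := fun h => hfree' a₀ h rfl
    refine ⟨insert a₀ U, ?_, netOutflow_insert ha₀, fun a hax _ => ?_⟩
    · rw [Finset.coe_insert, Set.injOn_insert (by exact_mod_cast ha₀)]
      exact ⟨hU, fun ⟨a, ha, hae⟩ => hfree' a ha hae⟩
    · exact Finset.mem_insert.trans (or_iff_right fun h => hax (h ▸ rfl))
  · have hbU : b ∈ U := (hagree b hy hx).mpr hb
    refine ⟨U.erase b, hU.mono (Finset.coe_subset.mpr (Finset.erase_subset _ _)),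
      fun w => by rw [netOutflow_erase hbU, unitFlow, unitFlow]; ring, fun a _ hax => ?_⟩
    exact Finset.mem_erase.trans (and_iff_right fun h => hax (h ▸ rfl))

/-- Since the chain has no repeated vertex, each step only touches arcs at vertices that the
rest of the chain never visits again. -/
lemma exists_augment_of_isChain {U₀ : Finset (Arc G)} :
    ∀ (l : List V) (c : V) (U : Finset (Arc G)), (c :: l).Nodup →
      (c :: l).IsChain (Residual U₀) → Set.InjOn Arc.edge (U : Set (Arc G)) →
      (∀ a : Arc G, a.src ∈ c :: l → a.dst ∈ c :: l → (a ∈ U ↔ a ∈ U₀)) →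
      ∃ U' : Finset (Arc G), Set.InjOn Arc.edge (U' : Set (Arc G)) ∧ ∀ w, netOutflow U' w =
        netOutflow U w + unitFlow c ((c :: l).getLast (List.cons_ne_nil c l)) w
  | [], c, U, _, _, hU, _ => ⟨U, hU, fun w => by rw [List.getLast_singleton, unitFlow, sub_self, add_zero]⟩
  | d :: l, c, U, hnd, hchain, hU, hagree => by
    obtain ⟨hcd, hchain⟩ := List.isChain_cons_cons.mp hchain
    obtain ⟨hc, hnd⟩ := List.nodup_cons.mp hnd
    obtain ⟨U₁, hU₁, hnet₁, hagree₁⟩ :=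
      exists_residual_step (S := {w | w ∈ c :: d :: l}) hU hcd (by simp) (by simp) hagree
    obtain ⟨U', hU', hnet'⟩ := exists_augment_of_isChain l d U₁ hnd hchain hU₁ fun a ha hb =>
      (hagree₁ a (fun h => hc (h ▸ ha)) (fun h => hc (h ▸ hb))).trans
        (hagree a (List.mem_cons_of_mem _ ha) (List.mem_cons_of_mem _ hb))
    refine ⟨U', hU', fun w => ?_⟩
    rw [hnet', hnet₁, List.getLast_cons (List.cons_ne_nil d l), add_assoc,
      unitFlow_add_unitFlow]

lemma exists_augment {U : Finset (Arc G)} {u v : V} (hU : Set.InjOn Arc.edge (U : Set (Arc G)))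
    (h : Relation.ReflTransGen (Residual U) u v) :
    ∃ U' : Finset (Arc G), Set.InjOn Arc.edge (U' : Set (Arc G)) ∧
      ∀ w, netOutflow U' w = netOutflow U w + unitFlow u v w := by
  obtain ⟨l, hnd, hchain, rfl⟩ := h.exists_nodup_isChain
  exact exists_augment_of_isChain l u U hnd hchain hU fun _ _ _ => Iff.rfl

/-- Every edge leaving a set closed in the residual graph carries an arc of `U` pointing out,
and no arc of `U` points in. -/
lemma cut_le_sum_netOutflow {U : Finset (Arc G)} {R : Finset V}
    (hR : ∀ x ∈ R, ∀ y, Residual U x y → y ∈ R) : (G.cut R : ℤ) ≤ ∑ w ∈ R, netOutflow U w := by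
  have hback : ∀ a ∈ U, a.dst ∈ R → a.src ∈ R := fun a ha h =>
    hR _ h _ (Or.inr ⟨a, ha, rfl, rfl⟩)
  set out := U.filter fun a => a.src ∈ R ∧ a.dst ∉ R
  have hsum : ∑ w ∈ R, netOutflow U w = out.card := by
    rw [sum_netOutflow, Finset.card_filter, Nat.cast_sum]
    refine Finset.sum_congr rfl fun a ha => ?_
    have := hback a ha
    by_cases a.src ∈ R <;> by_cases a.dst ∈ R <;> simp_all
  have hcut : {e | G.Crosses e R} ⊆ (out.image Arc.edge : Set E) := by
    rintro e ⟨x, y, he, hx, hy⟩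
    obtain ⟨a, ha, rfl⟩ : ∃ a ∈ U, a.edge = e := by
      by_contra hfree
      exact hy (hR x hx y (Or.inl ⟨e, he, fun a ha hae => hfree ⟨a, ha, hae⟩⟩))
    rcases Sym2.eq_iff.mp (a.ends_eq.symm.trans he) with ⟨h₁, h₂⟩ | ⟨h₁, h₂⟩
    · exact Finset.mem_image_of_mem _ (Finset.mem_filter.mpr ⟨ha, h₁ ▸ hx, h₂ ▸ hy⟩)
    · exact absurd (h₁ ▸ hback a ha (h₂ ▸ hx)) hy
  rw [hsum]
  exact_mod_cast (Set.ncard_le_ncard hcut (Finset.finite_toSet _)).trans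
    ((Set.ncard_coe_finset _).trans_le Finset.card_image_le)

/-- Ford–Fulkerson: while the value is below every `u`–`v` cut, `v` stays reachable in the
residual graph, so the flow can be augmented. -/
lemma exists_isFlow [Fintype V] {u v : V} {k : ℕ} (huv : u ≠ v)
    (hcut : ∀ A, u ∈ A → v ∉ A → k ≤ G.cut A) : ∀ j ≤ k, ∃ U : Finset (Arc G), IsFlow U u v j
  | 0, _ => ⟨∅, by simp [IsFlow, netOutflow]⟩
  | j + 1, hj => by
    obtain ⟨U, hU, hnet⟩ := exists_isFlow huv hcut j (by omega)
    by_cases hreach : Relation.ReflTransGen (Residual U) u v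
    · obtain ⟨U', hU', hnet'⟩ := exists_augment hU hreach
      refine ⟨U', hU', fun w => ?_⟩
      rw [hnet', hnet]
      push_cast
      ring
    · let R : Finset V := {w | Relation.ReflTransGen (Residual U) u w}
      have hu : u ∈ R := Finset.mem_filter.mpr ⟨Finset.mem_univ _, .refl⟩
      have hv : v ∉ R := by simpa [R] using hreach
      have hle := cut_le_sum_netOutflow (R := R) fun x hx y hxy => by
        simp only [R, Finset.mem_filter, Finset.mem_univ, true_and] at hx ⊢
        exact hx.tail hxy
      have hsum : ∑ w ∈ R, netOutflow U w = j := by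
        simp only [hnet, ← Finset.mul_sum, sum_unitFlow, if_pos hu, if_neg hv, sub_zero, mul_one]
      have := hcut R hu hv
      omega

lemma exists_walk_of_netOutflow_pos {v : V} (U : Finset (Arc G)) (a : V) (hav : a ≠ v)
    (hpos : 0 < netOutflow U a) (hnonneg : ∀ w, w ≠ v → 0 ≤ netOutflow U w) :
    ∃ (p : G.Walk a v) (U' : Finset (Arc G)), U' ⊆ U ∧
      (∀ w, netOutflow U' w = netOutflow U w - unitFlow a v w) ∧
      ∀ e ∈ p.edges, ∃ b ∈ U \ U', b.edge = e := by
  obtain ⟨b, hb, rfl⟩ := exists_mem_src_eq_of_netOutflow_pos hpos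
  by_cases hbv : b.dst = v
  · refine ⟨.cons b.edge (hbv ▸ b.ends_eq) (.nil v), U.erase b, Finset.erase_subset _ _,
      fun w => by rw [netOutflow_erase hb, hbv], ?_⟩
    intro e he
    exact ⟨b, Finset.mem_sdiff.mpr ⟨hb, Finset.notMem_erase b U⟩,
      (List.mem_singleton.mp he).symm⟩
  · have hnet := netOutflow_erase hb
    have hpos' : 0 < netOutflow (U.erase b) b.dst := by
      rw [hnet, unitFlow, if_neg b.src_ne_dst, if_pos rfl]
      linarith [hnonneg _ hbv]
    have hnonneg' : ∀ w, w ≠ v → 0 ≤ netOutflow (U.erase b) w := by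
      intro w hw
      have := hnonneg w hw
      rw [hnet, unitFlow]
      split_ifs <;> subst_vars <;> omega
    obtain ⟨p, U', hU', hnet', hp⟩ :=
      exists_walk_of_netOutflow_pos (U.erase b) b.dst hbv hpos' hnonneg'
    refine ⟨.cons b.edge b.ends_eq p, U', hU'.trans (Finset.erase_subset _ _),
      fun w => by rw [hnet', hnet, sub_sub, unitFlow_add_unitFlow], ?_⟩
    intro e he
    rcases List.mem_cons.mp he with rfl | he
    · exact ⟨b, Finset.mem_sdiff.mpr ⟨hb, fun h => Finset.notMem_erase b U (hU' h)⟩, rfl⟩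
    · obtain ⟨b', hb', hb'e⟩ := hp e he
      exact ⟨b', Finset.sdiff_subset_sdiff (Finset.erase_subset _ _) le_rfl hb', hb'e⟩
termination_by U.card
decreasing_by exact Finset.card_erase_lt_of_mem hb

lemma exists_walks_of_isFlow {u v : V} (huv : u ≠ v) :
    ∀ (j : ℕ) (U : Finset (Arc G)), IsFlow U u v j → ∃ P : Fin j → G.Walk u v,
      (∀ i i', i ≠ i' → ∀ e, e ∈ (P i).edges → e ∉ (P i').edges) ∧
        ∀ i, ∀ e ∈ (P i).edges, ∃ a ∈ U, a.edge = e
  | 0, _, _ => ⟨Fin.elim0, fun i => i.elim0, fun i => i.elim0⟩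
  | j + 1, U, ⟨hU, hnet⟩ => by
    obtain ⟨p, U', hU'U, hnet', hp⟩ := exists_walk_of_netOutflow_pos U u huv
      (by rw [hnet, unitFlow, if_pos rfl, if_neg huv.symm]; norm_num)
      fun w hw => by rw [hnet, unitFlow, if_neg (Ne.symm hw), sub_zero]; positivity
    have hflow : IsFlow U' u v j := by
      refine ⟨hU.mono (by exact_mod_cast hU'U), fun w => ?_⟩
      rw [hnet', hnet]
      push_cast
      ring
    obtain ⟨P, hP, hPU'⟩ := exists_walks_of_isFlow huv j U' hflow
    have hdisj : ∀ i, ∀ e ∈ p.edges, e ∉ (P i).edges := by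
      intro i e hep hePi
      obtain ⟨b, hb, rfl⟩ := hp e hep
      obtain ⟨b', hb', hbb'⟩ := hPU' i _ hePi
      rw [Finset.mem_sdiff] at hb
      exact hb.2 (hU (hU'U hb') hb.1 hbb' ▸ hb')
    refine ⟨Fin.cons p P, ?_, ?_⟩
    · intro i i' hii' e
      cases i using Fin.cases <;> cases i' using Fin.cases
      · exact absurd rfl hii'
      · simpa using hdisj _ e
      · simpa using fun h₁ h₂ => hdisj _ e h₂ h₁
      · simpa using hP _ _ (by simpa using hii') e
    · intro i
      cases i using Fin.cases
      · simpa using fun e he => (hp e he).imp fun b hb => ⟨(Finset.mem_sdiff.mp hb.1).1, hb.2⟩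
      · simpa using fun e he => (hPU' _ e he).imp fun b hb => ⟨hU'U hb.1, hb.2⟩

/-- **Menger's theorem** (edge version). -/
theorem exists_edgeDisjoint_paths_of_le_cut [Finite V] {u v : V} {k : ℕ} (huv : u ≠ v)
    (hcut : ∀ A, u ∈ A → v ∉ A → k ≤ G.cut A) : ∃ P : Fin k → G.Walk u v,
      (∀ i, (P i).IsPath) ∧ ∀ i j, i ≠ j → ∀ e, e ∈ (P i).edges → e ∉ (P j).edges := by
  cases nonempty_fintype V
  obtain ⟨U, hU⟩ := exists_isFlow huv hcut k le_rfl
  obtain ⟨P, hP, -⟩ := exists_walks_of_isFlow huv k U hU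
  exact ⟨fun i => (P i).bypass, fun i => (P i).isPath_bypass, fun i j hij e hi hj =>
    hP i j hij e (Walk.edges_bypass_subset _ hi) (Walk.edges_bypass_subset _ hj)⟩

end Menger

def IsCutSide (s : V) (A : Set V) : Prop :=
  s ∉ A ∧ A.Nonempty ∧ ∃ w ∉ A, w ≠ s

lemma SEdgeConnected.le_cut [Finite E] {s : V} {k : ℕ} (hG : G.SEdgeConnected s k)
    {A : Set V} (hA : IsCutSide s A) : k ≤ G.cut A := by
  obtain ⟨hsA, ⟨a, ha⟩, w, hw, hws⟩ := hA
  obtain ⟨P, -, hP⟩ := hG a w (fun h => hsA (h ▸ ha)) hws (fun h => hw (h ▸ ha))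
  exact le_cut_of_pairwise_disjoint hP ha hw

lemma sEdgeConnected_of_le_cut [Finite V] {s : V} {k : ℕ}
    (hcut : ∀ A, IsCutSide s A → k ≤ G.cut A) : G.SEdgeConnected s k := by
  intro u v hu hv huv
  refine exists_edgeDisjoint_paths_of_le_cut huv fun A huA hvA => ?_
  by_cases hsA : s ∈ A
  · rw [← cut_compl]
    exact hcut Aᶜ ⟨fun h => h hsA, ⟨v, hvA⟩, u, fun h => h huA, hu⟩
  · exact hcut A ⟨hsA, ⟨u, huA⟩, v, hvA, hv⟩

open scoped Classical in
lemma cut_lift_add [Finite E] {e₁ e₂ : E} {s x y : V} {A : Set V} (hne : e₁ ≠ e₂)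
    (h₁ : G.ends e₁ = s(s, x)) (h₂ : G.ends e₂ = s(s, y)) (hs : s ∉ A) :
    (G.lift e₁ e₂ x y).cut A + (if x ∈ A ∧ y ∈ A then 2 else 0) = G.cut A := by
  cases nonempty_fintype E
  have hkept : ∑ e : {e : E // e ≠ e₁ ∧ e ≠ e₂}, (if G.Crosses e.1 A then 1 else 0) +
      (if x ∈ A then 1 else 0) + (if y ∈ A then 1 else 0) = G.cut A := by
    have he₂ : e₂ ∈ Finset.univ.erase e₁ := Finset.mem_erase.mpr ⟨hne.symm, Finset.mem_univ _⟩
    rw [cut_eq_sum, ← Finset.add_sum_erase _ _ (Finset.mem_univ e₁),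
      ← Finset.add_sum_erase _ _ he₂,
      Finset.sum_subtype (p := fun e => e ≠ e₁ ∧ e ≠ e₂) (F := inferInstance) _
        (fun e => by simp [and_comm])]
    simp only [crosses_iff h₁, crosses_iff h₂, hs, false_and, false_or, not_false_eq_true,
      and_true]
    ring
  have hnew : ∑ _ : PLift (x ≠ y), (if x ∈ A ∧ y ∉ A ∨ y ∈ A ∧ x ∉ A then 1 else 0) =
      if x ∈ A ∧ y ∉ A ∨ y ∈ A ∧ x ∉ A then 1 else 0 := by
    by_cases hxy : x = y
    · subst hxy; simp
    · simp [hxy]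
  have hinl : ∀ e, (G.lift e₁ e₂ x y).Crosses (.inl e) A ↔ G.Crosses e.1 A := fun _ => Iff.rfl
  have hinr : ∀ h, (G.lift e₁ e₂ x y).Crosses (.inr h) A ↔ x ∈ A ∧ y ∉ A ∨ y ∈ A ∧ x ∉ A :=
    fun _ => crosses_iff rfl
  rw [← hkept, cut_eq_sum, Fintype.sum_sum_type]
  simp only [hinl, hinr, hnew]
  by_cases x ∈ A <;> by_cases y ∈ A <;> simp [*]

def IsTight (G : Multigraph V E) (s : V) (k : ℕ) (X : Set V) : Prop :=
  IsCutSide s X ∧ G.cut X = k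

lemma liftable_of_forall_isTight [Finite V] [Finite E] {s : V} {k : ℕ}
    (hG : G.SEdgeConnected s k) (heven : ∀ v, Even (G.degree v)) (hk : Even k) {e₁ e₂ : E}
    {x y : V} (hne : e₁ ≠ e₂) (h₁ : G.ends e₁ = s(s, x)) (h₂ : G.ends e₂ = s(s, y))
    (htight : ∀ X, G.IsTight s k X → x ∈ X → y ∉ X) : G.Liftable s k e₁ e₂ := by
  refine ⟨hne, x, y, h₁, h₂, sEdgeConnected_of_le_cut fun A hA => ?_⟩
  have hlift := cut_lift_add hne h₁ h₂ hA.1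
  have hle := hG.le_cut hA
  split_ifs at hlift with hxy
  · have hcut : G.cut A ≠ k := fun h => htight A ⟨hA, h⟩ hxy.1 hxy.2
    obtain ⟨m, hm⟩ := even_cut heven A
    obtain ⟨n, hn⟩ := hk
    omega
  · omega

lemma IsTight.union [Finite E] {s : V} {k : ℕ} (hG : G.SEdgeConnected s k) {X Y : Set V}
    (hX : G.IsTight s k X) (hY : G.IsTight s k Y) (hXY : (X ∩ Y).Nonempty)
    (hout : ∃ w ∉ X ∪ Y, w ≠ s) : G.IsTight s k (X ∪ Y) := by
  cases nonempty_fintype E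
  obtain ⟨⟨hsX, hXne, w, hwX, hws⟩, hcX⟩ := hX
  obtain ⟨⟨hsY, -, -⟩, hcY⟩ := hY
  have hunion : IsCutSide s (X ∪ Y) :=
    ⟨fun h => h.elim hsX hsY, hXne.mono Set.subset_union_left, hout⟩
  have h₁ := hG.le_cut hunion
  have h₂ := hG.le_cut (A := X ∩ Y) ⟨fun h => hsX h.1, hXY, w, fun h => hwX h.1, hws⟩
  have := G.cut_union_add_cut_inter_le X Y
  exact ⟨hunion, by omega⟩

/-- An edge from `s` into `X ∩ Y` is counted twice on the left of posimodularity. -/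
lemma IsTight.notMem_inter [Finite E] {s : V} {k : ℕ} (hG : G.SEdgeConnected s k)
    {X Y : Set V} (hX : G.IsTight s k X) (hY : G.IsTight s k Y)
    (hcover : ∀ w, w ≠ s → w ∈ X ∪ Y) {f : E} {p : V} (hf : G.ends f = s(s, p)) :
    p ∉ X ∩ Y := by
  cases nonempty_fintype E
  rintro ⟨hpX, hpY⟩
  obtain ⟨⟨hsX, -, wX, hwX, hwXs⟩, hcX⟩ := hX
  obtain ⟨⟨hsY, -, wY, hwY, hwYs⟩, hcY⟩ := hY
  have hwYX : wY ∈ X := (hcover wY hwYs).resolve_right hwY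
  have hwXY : wX ∈ Y := (hcover wX hwXs).resolve_left hwX
  have h₁ := hG.le_cut (A := X \ Y)
    ⟨fun h => hsX h.1, ⟨wY, hwYX, hwY⟩, wX, fun h => hwX h.1, hwXs⟩
  have h₂ := hG.le_cut (A := Y \ X)
    ⟨fun h => hsY h.1, ⟨wX, hwXY, hwX⟩, wY, fun h => hwY h.1, hwYs⟩
  have hf : 0 < {e | G.Crosses e (X ∩ Y) ∧ G.Crosses e (X ∪ Y)}.ncard :=
    (Set.ncard_pos (Set.toFinite _)).mpr ⟨f, (crosses_iff hf).mpr (Or.inr ⟨⟨hpX, hpY⟩,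
      fun h => hsX h.1⟩), (crosses_iff hf).mpr (Or.inr ⟨Or.inl hpX, fun h => h.elim hsX hsY⟩)⟩
  have := G.cut_diff_add_cut_diff_add_le X Y
  omega

noncomputable def farEnd {s : V} (f : {e : E // s ∈ G.ends e}) : V :=
  Sym2.Mem.other f.2

lemma ends_eq_farEnd {s : V} (f : {e : E // s ∈ G.ends e}) : G.ends f.1 = s(s, farEnd f) :=
  (Sym2.other_spec f.2).symm

lemma IsTight.exists_farEnd_notMem [Finite E] {s : V} {k : ℕ} (hG : G.SEdgeConnected s k)
    {X : Set V} (hX : G.IsTight s k X) (hdeg : 0 < G.degree s) :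
    ∃ f : {e : E // s ∈ G.ends e}, farEnd f ∉ X := by
  cases nonempty_fintype E
  by_contra! hall
  obtain ⟨⟨hsX, ⟨x, hx⟩, w, hwX, hws⟩, hcX⟩ := hX
  have hZ := hG.le_cut (A := (insert s X)ᶜ) ⟨fun h => h (Set.mem_insert _ _),
    ⟨w, by simp [hwX, hws]⟩, x, fun h => h (Set.mem_insert_of_mem _ hx), fun h => hsX (h ▸ hx)⟩
  have hX' : ∀ e p, G.ends e = s(s, p) → p ∈ X := by
    intro e p he
    let f : {e : E // s ∈ G.ends e} := ⟨e, he ▸ Sym2.mem_mk_left s p⟩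
    have hp : p = farEnd f := Sym2.congr_right.mp (he.symm.trans (ends_eq_farEnd f))
    exact hp ▸ hall f
  have := G.cut_insert_add_degree hsX hX'
  rw [cut_compl] at hZ
  omega

lemma exists_liftable_partition [Finite V] [Finite E] {s : V} {k : ℕ}
    (hG : G.SEdgeConnected s k) (heven : ∀ v, Even (G.degree v)) (hk : Even k)
    (hdeg : 2 ≤ G.degree s) : ∃ S : Set {e : E // s ∈ G.ends e}, ∃ a ∈ S, ∃ b ∉ S,
      ∀ f ∈ S, ∀ g ∉ S, (G.liftingGraph s k).Adj f g := by
  have hadj : ∀ f g : {e : E // s ∈ G.ends e}, f ≠ g →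
      (∀ X, G.IsTight s k X → farEnd f ∈ X → farEnd g ∉ X) → (G.liftingGraph s k).Adj f g :=
    fun f g hfg h => Or.inl (liftable_of_forall_isTight hG heven hk (Subtype.coe_injective.ne hfg)
      (ends_eq_farEnd f) (ends_eq_farEnd g) h)
  let T : Set (Set V) := {X | G.IsTight s k X ∧ ∃ f : {e : E // s ∈ G.ends e}, farEnd f ∈ X}
  by_cases hT : T.Nonempty
  · obtain ⟨X₀, hX₀⟩ := hT
    obtain ⟨X, -, hXmax⟩ := T.toFinite.exists_le_maximal hX₀
    obtain ⟨hX, f₁, hf₁⟩ := hXmax.prop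
    obtain ⟨g₁, hg₁⟩ := hX.exists_farEnd_notMem hG (by omega)
    refine ⟨{f | farEnd f ∈ X}, f₁, hf₁, g₁, hg₁, fun f hf g hg =>
      hadj f g (fun h => hg (h ▸ hf)) fun Y hY hfY hgY => ?_⟩
    by_cases hout : ∃ w ∉ X ∪ Y, w ≠ s
    · have hXY := hX.union hG hY ⟨_, hf, hfY⟩ hout
      exact hg (hXmax.2 ⟨hXY, f, Or.inl hf⟩ Set.subset_union_left (Or.inr hgY))
    · exact hX.notMem_inter hG hY (fun w hw => by_contra fun h => hout ⟨w, h, hw⟩)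
        (ends_eq_farEnd f) ⟨hf, hfY⟩
  · obtain ⟨a, b, ha, hb, hab⟩ := (Set.one_lt_ncard_iff (Set.toFinite _)).mp hdeg
    refine ⟨{⟨a, ha⟩}, ⟨a, ha⟩, rfl, ⟨b, hb⟩, fun h => hab (congrArg Subtype.val h).symm,
      fun f hf g hg => hadj f g (fun h => hg (h ▸ hf)) fun X hX hfX => ?_⟩
    exact (hT ⟨X, hX, f, hfX⟩).elim

end Multigraph

theorem lifting_graph_eulerian_general {V : Type u} {E : Type v} [Finite V] [Finite E]
    (G : Multigraph V E) (s : V) (k : ℕ)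
    (hke : Even k)
    (hG : G.SEdgeConnected s k)
    (heven : ∀ v : V, Even (G.degree v))
    (hdeg : 2 ≤ G.degree s) :
    ¬ ((G.liftingGraph s k)ᶜ).Connected := by
  obtain ⟨S, a, ha, b, hb, hS⟩ := Multigraph.exists_liftable_partition hG heven hke hdeg
  exact SimpleGraph.not_connected_compl_of_forall_adj ha hb hS

/-- **Lemma (Thomassen).** Let `k` be a positive even integer and `s` a vertex of
degree at least `2` in an `(s,k)`-edge-connected finite graph `G` all of whose
vertices have even degree. Then the complement of `L(G,s,k)` is disconnected. -/
theorem lifting_graph_eulerian {V : Type u} {E : Type v} [Finite V] [Finite E]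
    (G : Multigraph V E) (s : V) (k : ℕ)
    (hk : 0 < k) (hke : Even k)
    (hG : G.SEdgeConnected s k)
    (heven : ∀ v : V, Even (G.degree v))
    (hdeg : 2 ≤ G.degree s) :
    ¬ ((G.liftingGraph s k)ᶜ).Connected :=
  lifting_graph_eulerian_general G s k hke hG heven hdeg
end

section
/- Let G be a finite graph and let A_1 and A_2 be any two subsets of its vertex set. Then 2·[ |δ(A_1)| + |δ(A_2)| − ( |δ(A_1 ∩ A_2 : complement of A_1 ∪ A_2)| + |δ(A_2 ∖ A_1 : A_1 ∖ A_2)| ) ] = |δ(A_1 ∩ A_2)| + |δ(A_2 ∖ A_1)| + |δ(A_1 ∖ A_2)| + |δ(complement of A_1 ∪ A_2)|. -/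
namespace Multigraph

variable {V : Type u} {E : Type v}

/-- The boundary `δ(A)` of a set `A` of vertices: the set of edges with exactly one
end-vertex in `A`. -/
def boundary (G : Multigraph V E) (A : Set V) : Set E :=
  {e : E | ∃ a b, G.ends e = s(a, b) ∧ a ∈ A ∧ b ∉ A}

/-- `δ(A:B)`: the set of edges with one end-vertex in `A` and the other in `B`. -/
def boundaryBetween (G : Multigraph V E) (A B : Set V) : Set E :=
  {e : E | ∃ a b, G.ends e = s(a, b) ∧ a ∈ A ∧ b ∈ B}

end Multigraph

/-!
Both sides are sums over edges, so it suffices to compare the contribution of a single edge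
`e = ab`. The four sets `A₁ ∩ A₂`, `A₂ \ A₁`, `A₁ \ A₂`, `(A₁ ∪ A₂)ᶜ` partition `V`; if `a` and `b`
lie in the same cell, `e` counts nowhere. Otherwise `e` lies in the boundary of exactly two
cells, contributing `2` on the right. On the left, cells differing in one coordinate put `e` in
exactly one of `δ(A₁)`, `δ(A₂)` and in neither `δ(· : ·)`, while the two diagonal pairs of cells
put `e` in both `δ(A₁)` and `δ(A₂)` and in exactly one `δ(· : ·)`; either way the bracket is `1`.
-/
theorem Set.ncard_eq_sum_indicator {α R : Type*} [Fintype α] [AddCommMonoidWithOne R]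
    (s : Set α) : (s.ncard : R) = ∑ x, s.indicator 1 x := by
  classical
  simp [Set.indicator_apply, Set.ncard_eq_toFinset_card']

namespace Multigraph

variable {V E : Type*} (G : Multigraph V E) {e : E} {a b : V}

theorem mem_boundaryBetween_iff (h : G.ends e = s(a, b)) (A B : Set V) :
    e ∈ G.boundaryBetween A B ↔ a ∈ A ∧ b ∈ B ∨ b ∈ A ∧ a ∈ B := by
  simp only [boundaryBetween, Set.mem_ofPred_eq, h, Sym2.eq_iff]
  constructor
  · rintro ⟨x, y, ⟨rfl, rfl⟩ | ⟨rfl, rfl⟩, hx, hy⟩ <;> tauto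
  · rintro (⟨ha, hb⟩ | ⟨hb, ha⟩)
    exacts [⟨a, b, .inl ⟨rfl, rfl⟩, ha, hb⟩, ⟨b, a, .inr ⟨rfl, rfl⟩, hb, ha⟩]

theorem mem_boundary_iff (h : G.ends e = s(a, b)) (A : Set V) :
    e ∈ G.boundary A ↔ a ∈ A ∧ b ∉ A ∨ b ∈ A ∧ a ∉ A :=
  G.mem_boundaryBetween_iff h A Aᶜ

theorem cut_counting_identity_indicator (A₁ A₂ : Set V) (e : E) :
    (2 : ℤ) * ((G.boundary A₁).indicator 1 e + (G.boundary A₂).indicator 1 e -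
        ((G.boundaryBetween (A₁ ∩ A₂) (A₁ ∪ A₂)ᶜ).indicator 1 e +
          (G.boundaryBetween (A₂ \ A₁) (A₁ \ A₂)).indicator 1 e)) =
      (G.boundary (A₁ ∩ A₂)).indicator 1 e + (G.boundary (A₂ \ A₁)).indicator 1 e +
        (G.boundary (A₁ \ A₂)).indicator 1 e + (G.boundary (A₁ ∪ A₂)ᶜ).indicator 1 e := by
  classical
  obtain ⟨⟨a, b⟩, hab⟩ := Quot.exists_rep (G.ends e)
  simp only [Set.indicator_apply, G.mem_boundary_iff hab.symm,
    G.mem_boundaryBetween_iff hab.symm, Set.mem_inter_iff, Set.mem_union, Set.mem_sdiff,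
    Set.mem_compl_iff]
  by_cases a ∈ A₁ <;> by_cases a ∈ A₂ <;> by_cases b ∈ A₁ <;> by_cases b ∈ A₂ <;> simp [*]

end Multigraph

theorem cut_counting_identity_general {V : Type u} {E : Type v} [Finite E]
    (G : Multigraph V E) (A₁ A₂ : Set V) :
    (2 : ℤ) * (((G.boundary A₁).ncard : ℤ) + ((G.boundary A₂).ncard : ℤ) -
        (((G.boundaryBetween (A₁ ∩ A₂) ((A₁ ∪ A₂)ᶜ)).ncard : ℤ) +
          ((G.boundaryBetween (A₂ \ A₁) (A₁ \ A₂)).ncard : ℤ))) =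
      ((G.boundary (A₁ ∩ A₂)).ncard : ℤ) + ((G.boundary (A₂ \ A₁)).ncard : ℤ) +
        ((G.boundary (A₁ \ A₂)).ncard : ℤ) + ((G.boundary ((A₁ ∪ A₂)ᶜ)).ncard : ℤ) := by
  have := Fintype.ofFinite E
  simp only [Set.ncard_eq_sum_indicator, ← Finset.sum_add_distrib, ← Finset.sum_sub_distrib,
    Finset.mul_sum]
  exact Finset.sum_congr rfl fun e _ => G.cut_counting_identity_indicator A₁ A₂ e

/-- **Equation (2.1).** For any two vertex sets `A₁, A₂` of a finite graph `G`,
`2·[|δ(A₁)| + |δ(A₂)| − (|δ(A₁∩A₂ : (A₁∪A₂)ᶜ)| + |δ(A₂∖A₁ : A₁∖A₂)|)]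
  = |δ(A₁∩A₂)| + |δ(A₂∖A₁)| + |δ(A₁∖A₂)| + |δ((A₁∪A₂)ᶜ)|`. -/
theorem cut_counting_identity {V : Type u} {E : Type v} [Finite V] [Finite E]
    (G : Multigraph V E) (A₁ A₂ : Set V) :
    (2 : ℤ) * (((G.boundary A₁).ncard : ℤ) + ((G.boundary A₂).ncard : ℤ) -
        (((G.boundaryBetween (A₁ ∩ A₂) ((A₁ ∪ A₂)ᶜ)).ncard : ℤ) +
          ((G.boundaryBetween (A₂ \ A₁) (A₁ \ A₂)).ncard : ℤ))) =
      ((G.boundary (A₁ ∩ A₂)).ncard : ℤ) + ((G.boundary (A₂ \ A₁)).ncard : ℤ) +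
        ((G.boundary (A₁ \ A₂)).ncard : ℤ) + ((G.boundary ((A₁ ∪ A₂)ᶜ)).ncard : ℤ) :=
  cut_counting_identity_general G A₁ A₂
end

section
/- Let k be a positive integer, G a finite (s,k)-edge-connected graph, and sx, sy a pair of edges incident with s that are adjacent in L(G,s,k) (so the lift G_{sx,sy} is (s,k)-edge-connected). If su and sv are edges incident with s that are distinct from sx and sy and are not adjacent in L(G,s,k), then su and sv are not adjacent in L(G_{sx,sy},s,k). In other words, the k-lifting graph L(G_{sx,sy},s,k) is a subgraph of L(G,s,k). -/
/-!
Lifting at two disjoint pairs of edges at `s` can be done in either order, so if `f₁, f₂` is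
liftable in `G_{e₁,e₂}`, then `(G_{f₁,f₂})_{e₁,e₂}` is `(s,k)`-edge-connected. Undoing a lift
preserves `(s,k)`-edge-connectivity: in a family of edge-disjoint paths, the new edge `xy` is
used at most once and can be replaced by `xs, sy`, after which each walk is shortened to a path.
Hence `G_{f₁,f₂}` is `(s,k)`-edge-connected.
-/

namespace Multigraph

variable {V : Type u} {E : Type v} {E' : Type w}

namespace Walk

variable {G : Multigraph V E}

@[simp] lemma support_cons {u v w : V} (e : E) (h : G.ends e = s(u, v)) (p : G.Walk v w) :
    (cons e h p).support = u :: p.support := rfl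

@[simp] lemma edges_nil {v : V} : (nil (G := G) v).edges = [] := rfl

@[simp] lemma edges_cons {u v w : V} (e : E) (h : G.ends e = s(u, v)) (p : G.Walk v w) :
    (cons e h p).edges = e :: p.edges := rfl

def append : ∀ {u v w : V}, G.Walk u v → G.Walk v w → G.Walk u w
  | _, _, _, nil _, q => q
  | _, _, _, cons e h p, q => cons e h (p.append q)

@[simp] lemma edges_append {u v w : V} (p : G.Walk u v) (q : G.Walk v w) :
    (p.append q).edges = p.edges ++ q.edges := by
  induction p with
  | nil => rfl
  | cons e h p ih => simp [append, ih]

theorem exists_suffix_of_mem_support {u : V} :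
    ∀ {w v : V} (q : G.Walk w v), u ∈ q.support →
      ∃ r : G.Walk u v, (∀ e ∈ r.edges, e ∈ q.edges) ∧ ∃ l, q.support = l ++ r.support
  | _, _, nil _, hu => by
    obtain rfl := List.mem_singleton.mp hu
    exact ⟨nil u, by simp, [], rfl⟩
  | w, _, cons e h p, hu => by
    rcases List.mem_cons.mp hu with rfl | hu
    · exact ⟨cons e h p, fun _ he => he, [], rfl⟩
    · obtain ⟨r, hr, l, hl⟩ := p.exists_suffix_of_mem_support hu
      exact ⟨r, fun e' he' => List.mem_cons_of_mem _ (hr e' he'), w :: l, by simp [hl]⟩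

theorem exists_isPath_edges_subset {u v : V} (p : G.Walk u v) :
    ∃ q : G.Walk u v, q.IsPath ∧ ∀ e ∈ q.edges, e ∈ p.edges := by
  induction p with
  | nil w => exact ⟨nil w, List.nodup_singleton w, by simp⟩
  | @cons w _ _ e h p ih =>
    obtain ⟨q, hq, hqp⟩ := ih
    by_cases hw : w ∈ q.support
    · -- cut the cycle from `w` back to `w`
      obtain ⟨r, hrq, l, hl⟩ := q.exists_suffix_of_mem_support hw
      refine ⟨r, ?_, fun e' he' => List.mem_cons_of_mem _ (hqp e' (hrq e' he'))⟩
      have hq' : (l ++ r.support).Nodup := hl ▸ hq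
      exact hq'.of_append_right
    · refine ⟨cons e h q, List.nodup_cons.mpr ⟨hw, hq⟩, ?_⟩
      simp only [edges_cons, List.mem_cons]
      exact fun e' he' => he'.imp_right (hqp e')

theorem exists_simulation {G' : Multigraph V E'} (R : E' → E → Prop)
    (hsim : ∀ b u v, G.ends b = s(u, v) → ∃ q : G'.Walk u v, ∀ e ∈ q.edges, R e b)
    {u v : V} (p : G.Walk u v) :
    ∃ q : G'.Walk u v, ∀ e ∈ q.edges, ∃ b ∈ p.edges, R e b := by
  induction p with
  | nil w => exact ⟨nil w, by simp⟩
  | @cons u' v' _ b h p ih =>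
    obtain ⟨q₁, hq₁⟩ := hsim b u' v' h
    obtain ⟨q₂, hq₂⟩ := ih
    refine ⟨q₁.append q₂, fun e he => ?_⟩
    rcases List.mem_append.mp (edges_append q₁ q₂ ▸ he) with he | he
    · exact ⟨b, List.mem_cons_self .., hq₁ e he⟩
    · obtain ⟨b', hb', hR⟩ := hq₂ e he
      exact ⟨b', List.mem_cons_of_mem _ hb', hR⟩

end Walk

variable {G : Multigraph V E} {s : V} {k : ℕ}

theorem SEdgeConnected.of_simulation {G' : Multigraph V E'} (R : E' → E → Prop)
    (hR : ∀ e b b', R e b → R e b' → b = b')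
    (hsim : ∀ b u v, G.ends b = s(u, v) → ∃ q : G'.Walk u v, ∀ e ∈ q.edges, R e b)
    (h : G.SEdgeConnected s k) : G'.SEdgeConnected s k := by
  intro u v hu hv huv
  obtain ⟨P, -, hdisj⟩ := h u v hu hv huv
  choose Q hQ using fun i => Walk.exists_simulation R hsim (P i)
  choose Q' hQ'path hQ'Q using fun i => (Q i).exists_isPath_edges_subset
  refine ⟨Q', hQ'path, fun i j hij e hei hej => ?_⟩
  obtain ⟨b, hb, hRb⟩ := hQ i e (hQ'Q i e hei)
  obtain ⟨b', hb', hRb'⟩ := hQ j e (hQ'Q j e hej)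
  exact hdisj i j hij b hb (hR e b b' hRb hRb' ▸ hb')

theorem SEdgeConnected.of_lift {e₁ e₂ : E} {x y : V}
    (h : (G.lift e₁ e₂ x y).SEdgeConnected s k)
    (h₁ : G.ends e₁ = s(s, x)) (h₂ : G.ends e₂ = s(s, y)) : G.SEdgeConnected s k := by
  refine h.of_simulation (fun e => Sum.elim (fun b => e = b.1) (fun _ => e = e₁ ∨ e = e₂))
    ?_ ?_
  · rintro e (b | g) (b' | g') hb hb'
    · exact congrArg Sum.inl (Subtype.ext (hb.symm.trans hb'))
    · exact (Or.elim hb' (hb ▸ b.2.1) (hb ▸ b.2.2)).elim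
    · exact (Or.elim hb (hb' ▸ b'.2.1) (hb' ▸ b'.2.2)).elim
    · exact congrArg Sum.inr (Subsingleton.elim g g')
  · rintro (b | g) u v huv
    · exact ⟨.cons b.1 huv (.nil v), fun _ => List.mem_singleton.mp⟩
    · have hxy : s(x, y) = s(u, v) := huv
      rcases Sym2.eq_iff.mp hxy with ⟨rfl, rfl⟩ | ⟨rfl, rfl⟩
      · refine ⟨.cons e₁ (h₁.trans Sym2.eq_swap) (.cons e₂ h₂ (.nil _)), ?_⟩
        simp
      · refine ⟨.cons e₂ (h₂.trans Sym2.eq_swap) (.cons e₁ h₁ (.nil _)), ?_⟩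
        simp

theorem SEdgeConnected.map {G' : Multigraph V E'} (φ : E → E') (hφ : φ.Injective)
    (hends : ∀ e, G'.ends (φ e) = G.ends e) (h : G.SEdgeConnected s k) :
    G'.SEdgeConnected s k :=
  h.of_simulation (fun e b => e = φ b) (fun _ _ _ hb hb' => hφ (hb.symm.trans hb'))
    fun b _ v hb => ⟨.cons (φ b) ((hends b).trans hb) (.nil v), fun _ => List.mem_singleton.mp⟩

/-- The edges of `(G_{e₁,e₂})_{f₁,f₂}` as edges of `(G_{f₁,f₂})_{e₁,e₂}`: the two lifts
commute. -/
def liftLiftSwap {e₁ e₂ f₁ f₂ : E} {x y a b : V}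
    (hf₁ : f₁ ≠ e₁ ∧ f₁ ≠ e₂) (hf₂ : f₂ ≠ e₁ ∧ f₂ ≠ e₂) :
    {c : {e : E // e ≠ e₁ ∧ e ≠ e₂} ⊕ PLift (x ≠ y) //
      c ≠ .inl ⟨f₁, hf₁⟩ ∧ c ≠ .inl ⟨f₂, hf₂⟩} ⊕ PLift (a ≠ b) →
    {c : {e : E // e ≠ f₁ ∧ e ≠ f₂} ⊕ PLift (a ≠ b) //
      c ≠ .inl ⟨e₁, hf₁.1.symm, hf₂.1.symm⟩ ∧ c ≠ .inl ⟨e₂, hf₁.2.symm, hf₂.2.symm⟩} ⊕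
      PLift (x ≠ y)
  | .inl ⟨.inl d, hd⟩ =>
    .inl ⟨.inl ⟨d.1, fun h => hd.1 (congrArg Sum.inl (Subtype.ext h)),
        fun h => hd.2 (congrArg Sum.inl (Subtype.ext h))⟩,
      fun h => d.2.1 (congrArg Subtype.val (Sum.inl_injective h)),
      fun h => d.2.2 (congrArg Subtype.val (Sum.inl_injective h))⟩
  | .inl ⟨.inr g, _⟩ => .inr g
  | .inr g => .inl ⟨.inr g, Sum.inr_ne_inl, Sum.inr_ne_inl⟩

theorem leftInverse_liftLiftSwap {e₁ e₂ f₁ f₂ : E} {x y a b : V}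
    (hf₁ : f₁ ≠ e₁ ∧ f₁ ≠ e₂) (hf₂ : f₂ ≠ e₁ ∧ f₂ ≠ e₂) :
    Function.LeftInverse
      (liftLiftSwap (x := a) (y := b) (a := x) (b := y) ⟨hf₁.1.symm, hf₂.1.symm⟩
        ⟨hf₁.2.symm, hf₂.2.symm⟩)
      (liftLiftSwap hf₁ hf₂) := by
  rintro (⟨d | g, hd⟩ | g) <;> rfl

theorem SEdgeConnected.lift_lift_comm {e₁ e₂ f₁ f₂ : E} {x y a b : V}
    (hf₁ : f₁ ≠ e₁ ∧ f₁ ≠ e₂) (hf₂ : f₂ ≠ e₁ ∧ f₂ ≠ e₂)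
    (h : ((G.lift e₁ e₂ x y).lift (.inl ⟨f₁, hf₁⟩) (.inl ⟨f₂, hf₂⟩) a b).SEdgeConnected s k) :
    ((G.lift f₁ f₂ a b).lift (.inl ⟨e₁, hf₁.1.symm, hf₂.1.symm⟩)
      (.inl ⟨e₂, hf₁.2.symm, hf₂.2.symm⟩) x y).SEdgeConnected s k := by
  refine h.map (liftLiftSwap hf₁ hf₂)
    (leftInverse_liftLiftSwap hf₁ hf₂).injective ?_
  rintro (⟨d | g, hd⟩ | g) <;> rfl

theorem Liftable.of_lift {e₁ e₂ : E} {x y : V}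
    (h₁ : G.ends e₁ = s(s, x)) (h₂ : G.ends e₂ = s(s, y))
    {f₁ f₂ : E} (hf₁ : f₁ ≠ e₁ ∧ f₁ ≠ e₂) (hf₂ : f₂ ≠ e₁ ∧ f₂ ≠ e₂)
    (h : (G.lift e₁ e₂ x y).Liftable s k (.inl ⟨f₁, hf₁⟩) (.inl ⟨f₂, hf₂⟩)) :
    G.Liftable s k f₁ f₂ := by
  obtain ⟨hne, a, b, ha, hb, hab⟩ := h
  exact ⟨fun hf => hne (by subst hf; rfl), a, b, ha, hb,
    (hab.lift_lift_comm hf₁ hf₂).of_lift h₁ h₂⟩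

end Multigraph

theorem lifting_graph_monotone_general {V : Type u} {E : Type v}
    (G : Multigraph V E) (s : V) (k : ℕ)
    (e₁ e₂ : E) (x y : V)
    (h₁ : G.ends e₁ = s(s, x)) (h₂ : G.ends e₂ = s(s, y))
    (f₁ f₂ : E)
    (hf₁e : f₁ ≠ e₁ ∧ f₁ ≠ e₂) (hf₂e : f₂ ≠ e₁ ∧ f₂ ≠ e₂)
    (hnadj : ¬ (G.Liftable s k f₁ f₂ ∨ G.Liftable s k f₂ f₁)) :
    ¬ ((G.lift e₁ e₂ x y).Liftable s k (Sum.inl ⟨f₁, hf₁e⟩) (Sum.inl ⟨f₂, hf₂e⟩) ∨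
       (G.lift e₁ e₂ x y).Liftable s k (Sum.inl ⟨f₂, hf₂e⟩) (Sum.inl ⟨f₁, hf₁e⟩)) := by
  rintro (h | h)
  · exact hnadj (.inl (h.of_lift h₁ h₂ hf₁e hf₂e))
  · exact hnadj (.inr (h.of_lift h₁ h₂ hf₂e hf₁e))

/-- If a pair of edges `f₁, f₂` at `s` is not liftable in `G`, then it is also not
liftable in the lift `G_{e₁,e₂}` (performed on a liftable pair `e₁, e₂` at `s`);
that is, `L(G_{e₁,e₂}, s, k)` is a subgraph of `L(G,s,k)`. -/
theorem lifting_graph_monotone {V : Type u} {E : Type v} [Finite V] [Finite E]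
    (G : Multigraph V E) (s : V) (k : ℕ) (hk : 0 < k)
    (hG : G.SEdgeConnected s k)
    (e₁ e₂ : E) (x y : V)
    (h₁ : G.ends e₁ = s(s, x)) (h₂ : G.ends e₂ = s(s, y)) (hne : e₁ ≠ e₂)
    (hlift : (G.lift e₁ e₂ x y).SEdgeConnected s k)
    (f₁ f₂ : E) (hf₁ : s ∈ G.ends f₁) (hf₂ : s ∈ G.ends f₂)
    (hf₁e : f₁ ≠ e₁ ∧ f₁ ≠ e₂) (hf₂e : f₂ ≠ e₁ ∧ f₂ ≠ e₂) (hff : f₁ ≠ f₂)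
    (hnadj : ¬ (G.Liftable s k f₁ f₂ ∨ G.Liftable s k f₂ f₁)) :
    ¬ ((G.lift e₁ e₂ x y).Liftable s k (Sum.inl ⟨f₁, hf₁e⟩) (Sum.inl ⟨f₂, hf₂e⟩) ∨
       (G.lift e₁ e₂ x y).Liftable s k (Sum.inl ⟨f₂, hf₂e⟩) (Sum.inl ⟨f₁, hf₁e⟩)) :=
  lifting_graph_monotone_general G s k e₁ e₂ x y h₁ h₂ f₁ f₂ hf₁e hf₂e hnadj
end

section
/- Let k be a positive integer, let G be a k-edge-connected infinite graph, and let T be a finite set of vertices of G. Then G has a countable k-edge-connected subgraph containing T. -/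
/-! Choose `k` edge-disjoint paths between every pair of distinct vertices. Starting from `T`,
repeatedly add all vertices of the chosen paths between vertices collected so far. Each round adds
countably many vertices, so after countably many rounds we reach a countable vertex set closed under
this operation; together with the edges of the chosen paths inside it, it is a countable
`k`-edge-connected subgraph. -/

open Set

theorem exists_countable_superset_closed {α : Type*} (F : α → α → Set α)
    (hF : ∀ a b, (F a b).Countable) {T : Set α} (hT : T.Countable) :
    ∃ S : Set α, T ⊆ S ∧ S.Countable ∧ ∀ a ∈ S, ∀ b ∈ S, F a b ⊆ S := by
  let step : Set α → Set α := fun S => S ∪ ⋃ a ∈ S, ⋃ b ∈ S, F a b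
  let S : ℕ → Set α := fun n => step^[n] T
  have hS_succ : ∀ n, S (n + 1) = step (S n) := fun n => Function.iterate_succ_apply' step n T
  have hS_countable : ∀ n, (S n).Countable := by
    intro n
    induction n with
    | zero => exact hT
    | succ n ih =>
      rw [hS_succ]
      exact ih.union (ih.biUnion fun a _ => ih.biUnion fun b _ => hF a b)
  have hS_mono : Monotone S :=
    monotone_nat_of_le_succ fun n => by rw [hS_succ]; exact subset_union_left
  refine ⟨⋃ n, S n, subset_iUnion S 0, countable_iUnion hS_countable, ?_⟩
  intro a ha b hb
  obtain ⟨m, ha⟩ := mem_iUnion.1 ha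
  obtain ⟨n, hb⟩ := mem_iUnion.1 hb
  calc F a b ⊆ S (max m n + 1) := fun x hx => by
        rw [hS_succ]
        exact Or.inr <| mem_biUnion (hS_mono (le_max_left m n) ha) <|
          mem_biUnion (hS_mono (le_max_right m n) hb) hx
    _ ⊆ ⋃ n, S n := subset_iUnion S _

namespace Multigraph

variable {V : Type*} {E : Type*} {G : Multigraph V E}

namespace Walk

theorem start_mem_support {a b : V} (p : G.Walk a b) : a ∈ p.support := by
  cases p <;> simp [support]

theorem mem_support_of_mem_edges {a b : V} (p : G.Walk a b) {e : E} (he : e ∈ p.edges) {x : V}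
    (hx : x ∈ G.ends e) : x ∈ p.support := by
  induction p with
  | nil => simp [edges] at he
  | cons f h p ih =>
    simp only [edges, List.mem_cons] at he
    simp only [support, List.mem_cons]
    rcases he with rfl | he
    · rw [h, Sym2.mem_iff] at hx
      rcases hx with rfl | rfl
      · exact Or.inl rfl
      · exact Or.inr p.start_mem_support
    · exact Or.inr (ih he)

end Walk

theorem exists_countable_closed_under_walks (G : Multigraph V E) {ι : Type*} [Countable ι]
    (P : ∀ u v : V, u ≠ v → ι → G.Walk u v) {T : Set V} (hT : T.Countable) :
    ∃ (V' : Set V) (E' : Set E), T ⊆ V' ∧ V'.Countable ∧ E'.Countable ∧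
      (∀ e ∈ E', ∀ v ∈ G.ends e, v ∈ V') ∧
      ∀ u ∈ V', ∀ v ∈ V', ∀ (h : u ≠ v) (i : ι),
        (∀ x ∈ (P u v h i).support, x ∈ V') ∧ ∀ e ∈ (P u v h i).edges, e ∈ E' := by
  obtain ⟨V', hTV', hV', hclosed⟩ := exists_countable_superset_closed
    (fun u v => ⋃ (h : u ≠ v) (i : ι), {x | x ∈ (P u v h i).support})
    (fun u v => countable_iUnion fun h => countable_iUnion fun i => (List.finite_toSet _).countable)
    hT
  have hsupport : ∀ u ∈ V', ∀ v ∈ V', ∀ (h : u ≠ v) (i : ι), ∀ x ∈ (P u v h i).support, x ∈ V' :=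
    fun u hu v hv h i x hx => hclosed u hu v hv (mem_iUnion₂.2 ⟨h, i, hx⟩)
  refine ⟨V', ⋃ u ∈ V', ⋃ v ∈ V', ⋃ (h : u ≠ v) (i : ι), {e | e ∈ (P u v h i).edges},
    hTV', hV', ?_, ?_, fun u hu v hv h i => ⟨hsupport u hu v hv h i, fun e he => ?_⟩⟩
  · exact hV'.biUnion fun u _ => hV'.biUnion fun v _ =>
      countable_iUnion fun h => countable_iUnion fun i => (List.finite_toSet _).countable
  · intro e he x hx
    simp only [mem_iUnion, mem_ofPred_eq] at he
    obtain ⟨u, hu, v, hv, h, i, he⟩ := he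
    exact hsupport u hu v hv h i x ((P u v h i).mem_support_of_mem_edges he hx)
  · simp only [mem_iUnion, mem_ofPred_eq]
    exact ⟨u, hu, v, hv, h, i, he⟩

end Multigraph

theorem countable_subgraph_general {V : Type u} {E : Type v} (G : Multigraph V E) (k : ℕ)
    (hG : G.EdgeConnected k) (T : Set V) (hT : T.Finite) :
    ∃ (V' : Set V) (E' : Set E),
      T ⊆ V' ∧ V'.Countable ∧ E'.Countable ∧
      (∀ e ∈ E', ∀ v ∈ G.ends e, v ∈ V') ∧
      ∀ u v : V, u ∈ V' → v ∈ V' → u ≠ v →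
        ∃ P : Fin k → G.Walk u v,
          (∀ i, (P i).IsPath) ∧
          (∀ i, ∀ x ∈ (P i).support, x ∈ V') ∧
          (∀ i, ∀ e ∈ (P i).edges, e ∈ E') ∧
          ∀ i j, i ≠ j → ∀ e, e ∈ (P i).edges → e ∉ (P j).edges := by
  choose P hP_path hP_disjoint using hG
  obtain ⟨V', E', hTV', hV', hE', hends, hP_mem⟩ :=
    G.exists_countable_closed_under_walks P hT.countable
  exact ⟨V', E', hTV', hV', hE', hends, fun u v hu hv h =>
    ⟨P u v h, hP_path u v h, fun i => (hP_mem u hu v hv h i).1, fun i => (hP_mem u hu v hv h i).2,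
      hP_disjoint u v h⟩⟩

/-- Every `k`-edge-connected infinite graph `G` has, for each finite set `T` of
vertices, a countable `k`-edge-connected subgraph containing `T`. -/
theorem countable_subgraph {V : Type u} {E : Type v} (G : Multigraph V E) (k : ℕ)
    (hk : 0 < k) [Infinite V]
    (hG : G.EdgeConnected k) (T : Set V) (hT : T.Finite) :
    ∃ (V' : Set V) (E' : Set E),
      T ⊆ V' ∧ V'.Countable ∧ E'.Countable ∧
      (∀ e ∈ E', ∀ v ∈ G.ends e, v ∈ V') ∧
      ∀ u v : V, u ∈ V' → v ∈ V' → u ≠ v →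
        ∃ P : Fin k → G.Walk u v,
          (∀ i, (P i).IsPath) ∧
          (∀ i, ∀ x ∈ (P i).support, x ∈ V') ∧
          (∀ i, ∀ e ∈ (P i).edges, e ∈ E') ∧
          ∀ i j, i ≠ j → ∀ e, e ∈ (P i).edges → e ∉ (P j).edges :=
  countable_subgraph_general G k hG T hT
end
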